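/- arXiv:2410.00411 — 3 statements merged into one kernel-verified Lean document; each statement's English description precedes it below -/
import Mathlib

section
/- Let β₀ > 1 and for each β > 1 consider the analytic function Ψ_β(z) := ψ_β(βz) = 1 + Σ_{n=1}^∞ τ_β^n(1)·z^n on the open unit disk. Then: (i) as β → β₀ with β > β₀, Ψ_β converges to Ψ_{β₀} uniformly on every compact subset of the open unit disk; (ii) if β₀ is not simple, then Ψ_β → Ψ_{β₀} uniformly on every compact subset of the open unit disk as β → β₀ (two-sidedly); (iii) if β₀ is simple with L = L(1) (the length of the greedy expansion of 1 in base β₀), then as β → β₀ with β < β₀, Ψ_β converges uniformly on every compact subset of the open unit disk to the analytic function z ↦ Ψ_{β₀}(z)/(1 − z^L). -/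
open scoped BigOperators

/-- The beta-map `x ↦ βx - ⌊βx⌋`. -/
noncomputable def tau (β x : ℝ) : ℝ := β * x - ⌊β * x⌋

/-- Greedy digit `a_n(β,x) = ⌊β·τ_β^{n-1}(x)⌋` (meaningful for `n ≥ 1`). -/
noncomputable def dig (β x : ℝ) (n : ℕ) : ℤ := ⌊β * (tau β)^[n - 1] x⌋

/-- `x` is a simple point for `β`: some `τ_β^{n-1}(x)` lies in `{1/β, …, ⌊β⌋/β}`. -/
def IsSimplePt (β x : ℝ) : Prop :=
  ∃ n : ℕ, 1 ≤ n ∧ ∃ k : ℕ, 1 ≤ k ∧ (k : ℤ) ≤ ⌊β⌋ ∧ (tau β)^[n - 1] x = (k : ℝ) / β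

/-- `L(x)`: the least `n ≥ 1` with `τ_β^{n-1}(x) ∈ {1/β, …, ⌊β⌋/β}`. -/
noncomputable def Lpt (β x : ℝ) : ℕ :=
  sInf {n : ℕ | 1 ≤ n ∧ ∃ k : ℕ, 1 ≤ k ∧ (k : ℤ) ≤ ⌊β⌋ ∧ (tau β)^[n - 1] x = (k : ℝ) / β}

/-- `β` is simple if `x = 1` is a simple point for `β`. -/
def IsSimpleBeta (β : ℝ) : Prop := IsSimplePt β 1

open Classical in
/-- Quasi-greedy digit `d_n(β,1)` (meaningful for `n ≥ 1`): if `β` is simple with `L = L(1)`,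
the periodic sequence repeating the block `(a_1, …, a_{L-1}, a_L - 1)`; otherwise `a_n(β,1)`. -/
noncomputable def qdig (β : ℝ) (n : ℕ) : ℤ :=
  if IsSimpleBeta β then
    (if (n - 1) % Lpt β 1 = Lpt β 1 - 1 then dig β 1 (Lpt β 1) - 1
     else dig β 1 ((n - 1) % Lpt β 1 + 1))
  else dig β 1 n

/-- `φ_β(z) = Σ_{n≥1} a_n(β,1) β^{-n} z^n`. -/
noncomputable def phi (β : ℝ) (z : ℂ) : ℂ :=
  ∑' n : ℕ, (dig β 1 (n + 1) : ℂ) * (z / (β : ℂ)) ^ (n + 1)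

/-- `φ̂_β(z) = Σ_{n≥1} d_n(β,1) β^{-n} z^n`. -/
noncomputable def phiHat (β : ℝ) (z : ℂ) : ℂ :=
  ∑' n : ℕ, (qdig β (n + 1) : ℂ) * (z / (β : ℂ)) ^ (n + 1)

/-- `ψ_β(z) = 1 + Σ_{n≥1} τ_β^n(1) β^{-n} z^n`. -/
noncomputable def psi (β : ℝ) (z : ℂ) : ℂ :=
  1 + ∑' n : ℕ, (((tau β)^[n + 1] 1 : ℝ) : ℂ) * (z / (β : ℂ)) ^ (n + 1)

/-- `F_λ(x) = Σ_{n≥1} a_n(β,x)/(βλ)^n`. -/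
noncomputable def Ffun (β : ℝ) (lam : ℂ) (x : ℝ) : ℂ :=
  ∑' n : ℕ, (dig β x (n + 1) : ℂ) / ((β : ℂ) * lam) ^ (n + 1)

/-- `Ψ_β(z) = ψ_β(βz) = 1 + Σ_{n≥1} τ_β^n(1) zⁿ` on the open unit disk. -/
noncomputable def PsiU (β : ℝ) (z : ℂ) : ℂ :=
  1 + ∑' n : ℕ, (((tau β)^[n + 1] 1 : ℝ) : ℂ) * z ^ (n + 1)

/-!
Coefficientwise convergence of power series with uniformly bounded coefficients gives locally
uniform convergence on the unit disk, so everything reduces to the pointwise behaviour of the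
orbit `τ_β^n(1)` as `β → β₀`. From the right, `β ↦ β τ_β^n(1)` approaches `β₀ τ_{β₀}^n(1)` from
above, so the floors eventually stabilise and the orbit is right-continuous. From the left it
approaches from strictly below, so at an integer value the floor drops by one and the orbit
jumps to `1`: the left limit is the orbit of the quasi-greedy map `x ↦ βx - ⌈βx⌉ + 1`. This orbit
coincides with the greedy one unless `β₀` is simple, in which case it is the greedy orbit
`1, τ(1), …, τ^{L-1}(1)` repeated with period `L`, whose generating function is `Ψ_{β₀}/(1 - z^L)`.
-/

open Filter Set Topology Function

section PowerSeries

lemma summable_mul_pow_of_norm_le {c : ℕ → ℂ} {M : ℝ} (hc : ∀ n, ‖c n‖ ≤ M) {z : ℂ}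
    (hz : ‖z‖ < 1) : Summable fun n => c n * z ^ n := by
  refine Summable.of_norm_bounded ((summable_geometric_of_lt_one (norm_nonneg z) hz).mul_left M)
    fun n => ?_
  rw [norm_mul, norm_pow]
  exact mul_le_mul_of_nonneg_right (hc n) (by positivity)

theorem tendstoUniformlyOn_tsum_mul_pow {ι : Type*} {l : Filter ι} {c : ι → ℕ → ℂ} {d : ℕ → ℂ}
    {M : ℝ} (hc : ∀ i n, ‖c i n‖ ≤ M) (hd : ∀ n, ‖d n‖ ≤ M)
    (hlim : ∀ n, Tendsto (fun i => c i n) l (𝓝 (d n))) {K : Set ℂ}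
    (hK : K ⊆ Metric.ball 0 1) (hKc : IsCompact K) :
    TendstoUniformlyOn (fun i z => ∑' n, c i n * z ^ n) (fun z => ∑' n, d n * z ^ n) l K := by
  obtain ⟨r, ⟨hr0, hr1⟩, hKr⟩ := exists_pos_lt_subset_ball one_pos hKc.isClosed hK
  have hdiff_le (i : ι) (n : ℕ) : ‖c i n - d n‖ * r ^ n ≤ 2 * M * r ^ n := by
    gcongr
    linarith [norm_sub_le (c i n) (d n), hc i n, hd n]
  have herr : Tendsto (fun i => ∑' n, ‖c i n - d n‖ * r ^ n) l (𝓝 0) := by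
    have := tendsto_tsum_of_dominated_convergence
      ((summable_geometric_of_lt_one hr0.le hr1).mul_left (2 * M))
      (fun n => by simpa using ((hlim n).sub_const (d n)).norm.mul_const (r ^ n))
      (Eventually.of_forall fun i n => by
        rw [Real.norm_of_nonneg (by positivity)]
        exact hdiff_le i n)
    rwa [tsum_zero] at this
  rw [Metric.tendstoUniformlyOn_iff]
  intro ε hε
  filter_upwards [herr.eventually (gt_mem_nhds hε)] with i hi z hz
  have hz1 : ‖z‖ < 1 := hr1.trans' (mem_ball_zero_iff.1 (hKr hz))
  have hzr : ‖z‖ ≤ r := (mem_ball_zero_iff.1 (hKr hz)).le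
  have hsum : HasSum (fun n => ‖c i n - d n‖ * r ^ n) (∑' n, ‖c i n - d n‖ * r ^ n) :=
    (Summable.of_nonneg_of_le (fun n => by positivity) (hdiff_le i)
      ((summable_geometric_of_lt_one hr0.le hr1).mul_left (2 * M))).hasSum
  calc dist (∑' n, d n * z ^ n) (∑' n, c i n * z ^ n)
      = ‖∑' n, (c i n - d n) * z ^ n‖ := by
        rw [dist_comm, dist_eq_norm, ← (summable_mul_pow_of_norm_le (hc i) hz1).tsum_sub
          (summable_mul_pow_of_norm_le hd hz1)]
        simp only [sub_mul]
    _ ≤ ∑' n, ‖c i n - d n‖ * r ^ n := tsum_of_norm_bounded hsum fun n => by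
        rw [norm_mul, norm_pow]
        gcongr
    _ < ε := hi

lemma tsum_mul_pow_mul_one_sub_pow {a : ℕ → ℂ} {L : ℕ} (ha : ∀ n, a (n + L) = a n) {z : ℂ}
    (hs : Summable fun n => a n * z ^ n) :
    (∑' n, a n * z ^ n) * (1 - z ^ L) = ∑ n ∈ Finset.range L, a n * z ^ n := by
  have hshift : ∑' n, a (n + L) * z ^ (n + L) = (∑' n, a n * z ^ n) * z ^ L := by
    rw [← tsum_mul_right]
    congr 1 with n
    rw [ha, pow_add, mul_assoc]
  rw [mul_one_sub, ← hshift, ← hs.sum_add_tsum_nat_add L, add_sub_cancel_right]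

end PowerSeries

section Floor

variable {α : Type*} {l : Filter α} {g : α → ℝ} {y : ℝ}

lemma eventually_floor_eq_of_tendsto_of_ge (hg : Tendsto g l (𝓝 y))
    (hge : ∀ᶠ a in l, y ≤ g a) : ∀ᶠ a in l, ⌊g a⌋ = ⌊y⌋ := by
  filter_upwards [hge, hg.eventually_lt_const (Int.lt_floor_add_one y)] with a h1 h2
  exact Int.floor_eq_iff.2 ⟨(Int.floor_le y).trans h1, h2⟩

lemma eventually_floor_eq_ceil_sub_one_of_tendsto_of_lt (hg : Tendsto g l (𝓝 y))
    (hlt : ∀ᶠ a in l, g a < y) : ∀ᶠ a in l, ⌊g a⌋ = ⌈y⌉ - 1 := by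
  have hceil : ((⌈y⌉ - 1 : ℤ) : ℝ) < y := by
    push_cast
    linarith [Int.ceil_lt_add_one y]
  filter_upwards [hlt, hg.eventually_const_lt hceil] with a h1 h2
  refine Int.floor_eq_iff.2 ⟨h2.le, ?_⟩
  push_cast
  linarith [Int.le_ceil y]

end Floor

section Orbit

variable {β x : ℝ}

/-- The quasi-greedy β-map: `β x - ⌈β x⌉ + 1` is the left limit of `Int.fract` at `β x`. -/
noncomputable def tauLeft (β x : ℝ) : ℝ := β * x - ⌈β * x⌉ + 1

lemma tauLeft_mem_Ioc (β x : ℝ) : tauLeft β x ∈ Ioc 0 1 := by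
  unfold tauLeft
  constructor <;> linarith [Int.ceil_lt_add_one (β * x), Int.le_ceil (β * x)]

lemma iterate_tau_mem_Icc (β : ℝ) (n : ℕ) : (tau β)^[n] 1 ∈ Icc 0 1 := by
  cases n with
  | zero => simp
  | succ n =>
    rw [iterate_succ_apply']
    exact ⟨Int.fract_nonneg _, (Int.fract_lt_one _).le⟩

lemma iterate_tauLeft_mem_Ioc (β : ℝ) (n : ℕ) : (tauLeft β)^[n] 1 ∈ Ioc 0 1 := by
  cases n with
  | zero => simp
  | succ n =>
    rw [iterate_succ_apply']
    exact tauLeft_mem_Ioc _ _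

lemma tau_of_mul_eq_intCast {m : ℤ} (h : β * x = m) : tau β x = 0 := by
  simp [tau, h]

lemma tauLeft_of_mul_eq_intCast {m : ℤ} (h : β * x = m) : tauLeft β x = 1 := by
  simp [tauLeft, h]

lemma tauLeft_eq_tau (h : ∀ m : ℤ, β * x ≠ m) : tauLeft β x = tau β x := by
  have hceil : ⌈β * x⌉ = ⌊β * x⌋ + 1 :=
    (Int.ceil_eq_floor_add_one_iff_notMem _).2 fun ⟨m, hm⟩ => h m hm.symm
  simp only [tauLeft, tau, hceil]
  push_cast
  ring

lemma iterate_tau_eq_zero {n k : ℕ} (h : (tau β)^[n] 1 = 0) (hk : n ≤ k) :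
    (tau β)^[k] 1 = 0 := by
  obtain ⟨k, rfl⟩ := Nat.exists_eq_add_of_le hk
  induction k with
  | zero => exact h
  | succ k ih =>
    rw [← add_assoc, iterate_succ_apply', ih (by omega)]
    exact tau_of_mul_eq_intCast (m := 0) (by simp)

lemma tendsto_iterate_tau_nhdsGE {β₀ : ℝ} (hβ₀ : 0 ≤ β₀) (n : ℕ) :
    Tendsto (fun β => (tau β)^[n] 1) (𝓝[≥] β₀) (𝓝 ((tau β₀)^[n] 1)) ∧
      ∀ᶠ β in 𝓝[≥] β₀, (tau β₀)^[n] 1 ≤ (tau β)^[n] 1 := by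
  induction n with
  | zero => simp
  | succ n ih =>
    obtain ⟨hlim, hge⟩ := ih
    simp only [iterate_succ_apply']
    have hprod : Tendsto (fun β => β * (tau β)^[n] 1) (𝓝[≥] β₀) (𝓝 (β₀ * (tau β₀)^[n] 1)) :=
      (tendsto_nhdsWithin_of_tendsto_nhds tendsto_id).mul hlim
    have hprod_ge : ∀ᶠ β in 𝓝[≥] β₀, β₀ * (tau β₀)^[n] 1 ≤ β * (tau β)^[n] 1 := by
      filter_upwards [hge, self_mem_nhdsWithin] with β h hβ
      exact mul_le_mul hβ h (iterate_tau_mem_Icc β₀ n).1 (hβ₀.trans hβ)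
    have hfloor := eventually_floor_eq_of_tendsto_of_ge hprod hprod_ge
    refine ⟨(hprod.sub_const _).congr' ?_, ?_⟩
    · filter_upwards [hfloor] with β h
      simp only [tau, h]
    · filter_upwards [hfloor, hprod_ge] with β h h'
      simp only [tau, h]
      linarith

lemma tendsto_iterate_tau_nhdsLT {β₀ : ℝ} (hβ₀ : 0 < β₀) (n : ℕ) :
    Tendsto (fun β => (tau β)^[n] 1) (𝓝[<] β₀) (𝓝 ((tauLeft β₀)^[n] 1)) ∧
      ∀ᶠ β in 𝓝[<] β₀, (tau β)^[n] 1 ≤ (tauLeft β₀)^[n] 1 := by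
  induction n with
  | zero => simp
  | succ n ih =>
    obtain ⟨hlim, hle⟩ := ih
    simp only [iterate_succ_apply']
    have hprod : Tendsto (fun β => β * (tau β)^[n] 1) (𝓝[<] β₀)
        (𝓝 (β₀ * (tauLeft β₀)^[n] 1)) :=
      (tendsto_nhdsWithin_of_tendsto_nhds tendsto_id).mul hlim
    have hprod_lt : ∀ᶠ β in 𝓝[<] β₀, β * (tau β)^[n] 1 < β₀ * (tauLeft β₀)^[n] 1 := by
      filter_upwards [hle, Ioo_mem_nhdsLT hβ₀] with β h hβ
      calc β * (tau β)^[n] 1 ≤ β * (tauLeft β₀)^[n] 1 := mul_le_mul_of_nonneg_left h hβ.1.le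
        _ < β₀ * (tauLeft β₀)^[n] 1 :=
          mul_lt_mul_of_pos_right hβ.2 (iterate_tauLeft_mem_Ioc β₀ n).1
    have hfloor := eventually_floor_eq_ceil_sub_one_of_tendsto_of_lt hprod hprod_lt
    refine ⟨((hprod.sub_const _).add_const 1).congr' ?_, ?_⟩
    · filter_upwards [hfloor] with β h
      simp only [tau, h]
      push_cast
      ring
    · filter_upwards [hfloor, hprod_lt] with β h h'
      simp only [tau, tauLeft, h]
      push_cast
      linarith

end Orbit

section Simple

variable {β : ℝ}

/-- The set whose least element is `Lpt β 1`; `β` is simple iff it is nonempty. -/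
def simpleTimes (β : ℝ) : Set ℕ :=
  {n | 1 ≤ n ∧ ∃ k : ℕ, 1 ≤ k ∧ (k : ℤ) ≤ ⌊β⌋ ∧ (tau β)^[n - 1] 1 = (k : ℝ) / β}

lemma succ_mem_simpleTimes_iff (hβ : 0 < β) (j : ℕ) :
    j + 1 ∈ simpleTimes β ↔ 0 < (tau β)^[j] 1 ∧ ∃ m : ℤ, β * (tau β)^[j] 1 = m := by
  simp only [simpleTimes, mem_ofPred_eq, Nat.add_sub_cancel, le_add_iff_nonneg_left, zero_le,
    true_and]
  constructor
  · rintro ⟨k, hk, -, hx⟩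
    rw [hx]
    exact ⟨by positivity, k, by field_simp; norm_cast⟩
  · rintro ⟨hpos, m, hm⟩
    have hm0 : (0 : ℝ) < m := hm ▸ mul_pos hβ hpos
    lift m to ℕ using by exact_mod_cast hm0.le
    have hmβ : (m : ℝ) ≤ β := by
      rw [Int.cast_natCast] at hm
      nlinarith [(iterate_tau_mem_Icc β j).2]
    refine ⟨m, by exact_mod_cast hm0, Int.le_floor.2 (by exact_mod_cast hmβ), ?_⟩
    rw [eq_div_iff hβ.ne', mul_comm, hm, Int.cast_natCast]

lemma iterate_tauLeft_eq_iterate_tau (hβ : 0 < β) {n : ℕ}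
    (h : ∀ i < n, i + 1 ∉ simpleTimes β) : (tauLeft β)^[n] 1 = (tau β)^[n] 1 := by
  induction n with
  | zero => rfl
  | succ n ih =>
    have hn := ih fun i hi => h i (by omega)
    rw [iterate_succ_apply', iterate_succ_apply', hn]
    refine tauLeft_eq_tau fun m hm => h n n.lt_succ_self ?_
    rw [succ_mem_simpleTimes_iff hβ, ← hn]
    exact ⟨(iterate_tauLeft_mem_Ioc β n).1, m, hn ▸ hm⟩

lemma iterate_tauLeft_eq_iterate_tau_of_not_isSimpleBeta (hβ : 0 < β)
    (hns : ¬ IsSimpleBeta β) (n : ℕ) : (tauLeft β)^[n] 1 = (tau β)^[n] 1 :=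
  iterate_tauLeft_eq_iterate_tau hβ fun i _ hi => hns ⟨i + 1, hi⟩

lemma one_le_Lpt (hs : IsSimpleBeta β) : 1 ≤ Lpt β 1 :=
  (Nat.sInf_mem hs : Lpt β 1 ∈ simpleTimes β).1

lemma exists_mul_iterate_tau_pred_Lpt_eq_intCast (hβ : 0 < β) (hs : IsSimpleBeta β) :
    ∃ m : ℤ, β * (tau β)^[Lpt β 1 - 1] 1 = m := by
  have hL : Lpt β 1 ∈ simpleTimes β := Nat.sInf_mem hs
  rw [← Nat.sub_add_cancel (one_le_Lpt hs), succ_mem_simpleTimes_iff hβ] at hL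
  exact hL.2

lemma iterate_tauLeft_eq_iterate_tau_of_lt_Lpt (hβ : 0 < β) {n : ℕ} (hn : n < Lpt β 1) :
    (tauLeft β)^[n] 1 = (tau β)^[n] 1 :=
  iterate_tauLeft_eq_iterate_tau hβ fun i hi =>
    Nat.notMem_of_lt_sInf (show i + 1 < Lpt β 1 by omega)

lemma iterate_tau_Lpt (hβ : 0 < β) (hs : IsSimpleBeta β) : (tau β)^[Lpt β 1] 1 = 0 := by
  obtain ⟨m, hm⟩ := exists_mul_iterate_tau_pred_Lpt_eq_intCast hβ hs
  rw [← Nat.sub_add_cancel (one_le_Lpt hs), iterate_succ_apply']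
  exact tau_of_mul_eq_intCast hm

lemma iterate_tauLeft_Lpt (hβ : 0 < β) (hs : IsSimpleBeta β) : (tauLeft β)^[Lpt β 1] 1 = 1 := by
  obtain ⟨m, hm⟩ := exists_mul_iterate_tau_pred_Lpt_eq_intCast hβ hs
  rw [← Nat.sub_add_cancel (one_le_Lpt hs), iterate_succ_apply',
    iterate_tauLeft_eq_iterate_tau_of_lt_Lpt hβ (Nat.sub_lt (one_le_Lpt hs) one_pos)]
  exact tauLeft_of_mul_eq_intCast hm

end Simple

section Psi

lemma PsiU_eq_tsum (β : ℝ) {z : ℂ} (hz : ‖z‖ < 1) :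
    PsiU β z = ∑' n, ((tau β)^[n] 1 : ℂ) * z ^ n := by
  rw [PsiU, (summable_mul_pow_of_norm_le (M := 1) (fun n => ?_) hz).tsum_eq_zero_add]
  · simp
  · rw [Complex.norm_real, Real.norm_of_nonneg (iterate_tau_mem_Icc β n).1]
    exact (iterate_tau_mem_Icc β n).2

lemma tsum_iterate_tauLeft_mul_pow {β : ℝ} (hβ : 0 < β) (hs : IsSimpleBeta β) {z : ℂ}
    (hz : ‖z‖ < 1) :
    ∑' n, ((tauLeft β)^[n] 1 : ℂ) * z ^ n = PsiU β z / (1 - z ^ Lpt β 1) := by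
  have hne : 1 - z ^ Lpt β 1 ≠ 0 := by
    refine sub_ne_zero.2 fun h => ?_
    have : ‖z ^ Lpt β 1‖ < 1 := by
      rw [norm_pow]
      exact pow_lt_one₀ (norm_nonneg z) hz (Nat.one_le_iff_ne_zero.1 (one_le_Lpt hs))
    simp [← h] at this
  have hsum : Summable fun n => ((tauLeft β)^[n] 1 : ℂ) * z ^ n := by
    refine summable_mul_pow_of_norm_le (M := 1) (fun n => ?_) hz
    rw [Complex.norm_real, Real.norm_of_nonneg (iterate_tauLeft_mem_Ioc β n).1.le]
    exact (iterate_tauLeft_mem_Ioc β n).2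
  have hperiodic (n : ℕ) : (tauLeft β)^[n + Lpt β 1] 1 = (tauLeft β)^[n] 1 := by
    rw [iterate_add_apply, iterate_tauLeft_Lpt hβ hs]
  have htail (n : ℕ) (hn : n ∉ Finset.range (Lpt β 1)) : ((tau β)^[n] 1 : ℂ) * z ^ n = 0 := by
    rw [iterate_tau_eq_zero (iterate_tau_Lpt hβ hs) (by simpa using hn)]
    simp
  rw [eq_div_iff hne, tsum_mul_pow_mul_one_sub_pow (fun n => by rw [hperiodic]) hsum,
    PsiU_eq_tsum β hz, tsum_eq_sum htail]
  refine Finset.sum_congr rfl fun n hn => ?_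
  rw [iterate_tauLeft_eq_iterate_tau_of_lt_Lpt hβ (Finset.mem_range.1 hn)]

lemma tendstoUniformlyOn_PsiU {l : Filter ℝ} {a : ℕ → ℝ} (ha : ∀ n, a n ∈ Icc 0 1)
    (hlim : ∀ n, Tendsto (fun β => (tau β)^[n] 1) l (𝓝 (a n))) {K : Set ℂ}
    (hK : K ⊆ Metric.ball 0 1) (hKc : IsCompact K) :
    TendstoUniformlyOn (fun β => PsiU β) (fun z => ∑' n, (a n : ℂ) * z ^ n) l K := by
  have hnorm {b : ℝ} (hb : b ∈ Icc 0 1) : ‖(b : ℂ)‖ ≤ 1 := by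
    rw [Complex.norm_real, Real.norm_of_nonneg hb.1]
    exact hb.2
  refine (tendstoUniformlyOn_tsum_mul_pow (fun β n => hnorm (iterate_tau_mem_Icc β n))
    (fun n => hnorm (ha n)) (fun n => (Complex.continuous_ofReal.tendsto _).comp (hlim n))
    hK hKc).congr (Eventually.of_forall fun β z hz => ?_)
  exact (PsiU_eq_tsum β (mem_ball_zero_iff.1 (hK hz))).symm

end Psi

theorem stmt8 (β₀ : ℝ) (hβ₀ : 1 < β₀) :
    (∀ K : Set ℂ, K ⊆ Metric.ball 0 1 → IsCompact K →
      TendstoUniformlyOn (fun β : ℝ => PsiU β) (PsiU β₀)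
        (nhdsWithin β₀ (Set.Ioi β₀)) K) ∧
    (¬ IsSimpleBeta β₀ →
      ∀ K : Set ℂ, K ⊆ Metric.ball 0 1 → IsCompact K →
        TendstoUniformlyOn (fun β : ℝ => PsiU β) (PsiU β₀) (nhds β₀) K) ∧
    (IsSimpleBeta β₀ →
      ∀ K : Set ℂ, K ⊆ Metric.ball 0 1 → IsCompact K →
        TendstoUniformlyOn (fun β : ℝ => PsiU β)
          (fun z => PsiU β₀ z / (1 - z ^ Lpt β₀ 1))
          (nhdsWithin β₀ (Set.Iio β₀)) K) := by
  have hpos : 0 < β₀ := by linarith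
  have hPsi (K : Set ℂ) (hK : K ⊆ Metric.ball 0 1) :
      EqOn (fun z => ∑' n, ((tau β₀)^[n] 1 : ℂ) * z ^ n) (PsiU β₀) K :=
    fun z hz => (PsiU_eq_tsum β₀ (mem_ball_zero_iff.1 (hK hz))).symm
  refine ⟨fun K hK hKc => ?_, fun hns K hK hKc => ?_, fun hs K hK hKc => ?_⟩
  · refine (tendstoUniformlyOn_PsiU (iterate_tau_mem_Icc β₀) (fun n => ?_) hK hKc).congr_right
      (hPsi K hK)
    exact (tendsto_iterate_tau_nhdsGE hpos.le n).1.mono_left (nhdsWithin_mono _ Ioi_subset_Ici_self)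
  · refine (tendstoUniformlyOn_PsiU (iterate_tau_mem_Icc β₀) (fun n => ?_) hK hKc).congr_right
      (hPsi K hK)
    rw [← nhdsLT_sup_nhdsGE]
    refine tendsto_sup.2 ⟨?_, (tendsto_iterate_tau_nhdsGE hpos.le n).1⟩
    rw [← iterate_tauLeft_eq_iterate_tau_of_not_isSimpleBeta hpos hns]
    exact (tendsto_iterate_tau_nhdsLT hpos n).1
  · refine (tendstoUniformlyOn_PsiU (fun n => Ioc_subset_Icc_self (iterate_tauLeft_mem_Ioc β₀ n))
      (fun n => (tendsto_iterate_tau_nhdsLT hpos n).1) hK hKc).congr_right fun z hz => ?_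
    exact tsum_iterate_tauLeft_mul_pow hpos hs (mem_ball_zero_iff.1 (hK hz))
end

section
/- Let β₀ > 1 and let λ ∈ ℂ with |β₀λ| > 1. Then there exist a constant C > 0 and a strictly increasing sequence (l(M))_{M≥1} of positive integers with d_{l(M)}(β₀,1) > 0 for every M ≥ 1, such that |Σ_{n=1}^∞ d_{n−1+l(M)}(β₀,1)/(β₀λ)^n| ≥ C for every M ≥ 1. -/
/-! Write `w = β₀λ` and `T l = ∑_{n ≥ 0} d_{n+l} / w^(n+1)`, so that `w T l = d_l + T (l + 1)`.
The quasi-greedy digits are bounded integers and infinitely many are positive: for simple `β`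
by periodicity, otherwise because a tail of zero digits would make the orbit of `1` grow like
`β^k` under `τ_β`. If `l < l'` are consecutive nonzero digits, then `T (l + 1) = T l' / w^(l'-l-1)`,
so `1 ≤ |d_l| ≤ ‖w‖ ‖T l‖ + ‖T l'‖`, and one of `‖T l‖`, `‖T l'‖` is at least `1 / (‖w‖ + 1)`. -/

open scoped BigOperators

open Set Filter

section BetaExpansion

variable {β x : ℝ}

lemma tau_mem_Ico (β x : ℝ) : tau β x ∈ Ico 0 1 :=
  ⟨Int.fract_nonneg _, Int.fract_lt_one _⟩

lemma tau_iterate_mem_Icc (β : ℝ) (hx : x ∈ Icc 0 1) : ∀ n, (tau β)^[n] x ∈ Icc 0 1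
  | 0 => hx
  | n + 1 => by
    rw [Function.iterate_succ_apply']
    exact Ico_subset_Icc_self (tau_mem_Ico β _)

lemma tau_iterate_succ (β x : ℝ) (n : ℕ) :
    (tau β)^[n + 1] x = β * (tau β)^[n] x - dig β x (n + 1) := by
  rw [Function.iterate_succ_apply']
  rfl

lemma dig_mem_Icc (hβ : 0 < β) (hx : x ∈ Icc 0 1) (n : ℕ) : dig β x n ∈ Icc 0 ⌊β⌋ := by
  obtain ⟨h0, h1⟩ := tau_iterate_mem_Icc β hx (n - 1)
  exact ⟨Int.floor_nonneg.2 (by positivity),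
    Int.floor_le_floor (mul_le_of_le_one_right hβ.le h1)⟩

/-- The last nonzero point `y` of the orbit has `β y = k`, its (integer) next digit. -/
lemma isSimplePt_of_tau_iterate_eq_zero (hβ : 0 < β) (hx : x ∈ Ioc 0 1) {m : ℕ}
    (hm : (tau β)^[m] x = 0) : IsSimplePt β x := by
  induction m with
  | zero => exact absurd hm hx.1.ne'
  | succ n ih =>
    by_cases hn : (tau β)^[n] x = 0
    · exact ih hn
    have hs : 0 < (tau β)^[n] x :=
      (tau_iterate_mem_Icc β (Ioc_subset_Icc_self hx) n).1.lt_of_ne' hn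
    have hj : (dig β x (n + 1) : ℝ) = β * (tau β)^[n] x := by
      linarith [tau_iterate_succ β x n]
    have hjpos : 0 < dig β x (n + 1) := by exact_mod_cast hj ▸ mul_pos hβ hs
    obtain ⟨k, hk⟩ := Int.eq_ofNat_of_zero_le hjpos.le
    refine ⟨n + 1, le_add_self, k, by omega,
      hk ▸ (dig_mem_Icc hβ (Ioc_subset_Icc_self hx) _).2, ?_⟩
    rw [eq_div_iff hβ.ne', mul_comm, ← Int.cast_natCast, ← hk, hj]
    rfl

lemma frequently_dig_pos_of_not_isSimplePt (hβ : 1 < β) (hx : x ∈ Ioc 0 1)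
    (hns : ¬ IsSimplePt β x) : ∃ᶠ n in atTop, 0 < dig β x n := by
  have hβ0 : 0 < β := zero_lt_one.trans hβ
  have hxI : x ∈ Icc 0 1 := Ioc_subset_Icc_self hx
  by_contra h
  obtain ⟨N, hN⟩ := eventually_atTop.1 (not_frequently.1 h)
  set y := (tau β)^[N] x
  have hy : 0 < y := (tau_iterate_mem_Icc β hxI N).1.lt_of_ne'
    fun h0 => hns (isSimplePt_of_tau_iterate_eq_zero hβ0 hx h0)
  -- with all later digits zero, `τ_β` acts as multiplication by `β` along the orbit
  have hgrow : ∀ k, (tau β)^[N + k] x = β ^ k * y := by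
    intro k
    induction k with
    | zero => simp [y]
    | succ k ih =>
      have hd : dig β x (N + k + 1) = 0 :=
        le_antisymm (not_lt.1 (hN _ (by omega))) (dig_mem_Icc hβ0 hxI _).1
      rw [← add_assoc, tau_iterate_succ, ih, hd, pow_succ]
      push_cast
      ring
  obtain ⟨k, hk⟩ := pow_unbounded_of_one_lt y⁻¹ hβ
  have hbig : 1 < β ^ k * y :=
    calc 1 = y⁻¹ * y := (inv_mul_cancel₀ hy.ne').symm
      _ < β ^ k * y := mul_lt_mul_of_pos_right hk hy
  linarith [(tau_iterate_mem_Icc β hxI (N + k)).2, hgrow k]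

lemma Lpt_spec (h : IsSimpleBeta β) :
    1 ≤ Lpt β 1 ∧ ∃ k : ℕ, 1 ≤ k ∧ (k : ℤ) ≤ ⌊β⌋ ∧ (tau β)^[Lpt β 1 - 1] 1 = k / β :=
  Nat.sInf_mem h

lemma one_le_dig_Lpt (hβ : 0 < β) (h : IsSimpleBeta β) : 1 ≤ dig β 1 (Lpt β 1) := by
  obtain ⟨-, k, hk1, -, hk⟩ := Lpt_spec h
  rw [dig, hk, mul_div_cancel₀ _ hβ.ne', Int.floor_natCast]
  exact_mod_cast hk1

lemma qdig_mem_Icc (hβ : 1 < β) (n : ℕ) : qdig β n ∈ Icc 0 ⌊β⌋ := by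
  have hβ0 : 0 < β := zero_lt_one.trans hβ
  have hdig := dig_mem_Icc hβ0 (right_mem_Icc.2 zero_le_one)
  rw [qdig]
  split_ifs with hs
  · have hlow := one_le_dig_Lpt hβ0 hs
    have hup := (hdig (Lpt β 1)).2
    exact ⟨by omega, by omega⟩
  · exact hdig _
  · exact hdig _

lemma frequently_qdig_pos_of_isSimpleBeta (hβ : 1 < β) (hs : IsSimpleBeta β) :
    ∃ᶠ n in atTop, 0 < qdig β n := by
  obtain ⟨hL, k, -, -, hk⟩ := Lpt_spec hs
  rcases hL.eq_or_lt with hL1 | hL2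
  · -- `L = 1` forces `β = k`, so every quasi-greedy digit equals `k - 1 ≥ 1`
    have hβk : β = k := by
      rw [← hL1, Nat.sub_self, Function.iterate_zero_apply, eq_div_iff (by positivity)] at hk
      linarith
    refine Frequently.of_forall fun n => ?_
    have hk2 : (2 : ℤ) ≤ k := by exact_mod_cast (hβk ▸ hβ : (1 : ℝ) < k)
    rw [qdig, if_pos hs, ← hL1, if_pos (Nat.mod_one _), dig, Nat.sub_self,
      Function.iterate_zero_apply, mul_one, hβk, Int.floor_natCast]
    omega
  · -- the first digit of each period is `a_1 = ⌊β⌋`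
    refine frequently_atTop.2 fun N => ⟨Lpt β 1 * N + 1, by nlinarith, ?_⟩
    rw [qdig, if_pos hs, Nat.add_sub_cancel, Nat.mul_mod_right, if_neg (by omega)]
    simpa [dig] using Int.floor_pos.2 hβ.le

lemma frequently_qdig_pos (hβ : 1 < β) : ∃ᶠ n in atTop, 0 < qdig β n := by
  by_cases hs : IsSimpleBeta β
  · exact frequently_qdig_pos_of_isSimpleBeta hβ hs
  · simpa only [qdig, if_neg hs] using
      frequently_dig_pos_of_not_isSimplePt hβ (right_mem_Ioc.2 zero_lt_one) hs

end BetaExpansion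

section TailSum

variable {a : ℕ → ℤ} {w : ℂ} {B : ℤ}

noncomputable def tailSum (a : ℕ → ℤ) (w : ℂ) (l : ℕ) : ℂ :=
  ∑' n : ℕ, (a (n + l) : ℂ) / w ^ (n + 1)

lemma summable_tailSum (ha : ∀ n, |a n| ≤ B) (hw : 1 < ‖w‖) (l : ℕ) :
    Summable fun n : ℕ => (a (n + l) : ℂ) / w ^ (n + 1) := by
  have hgeom : Summable fun n : ℕ => (B : ℝ) * ‖w‖⁻¹ ^ (n + 1) :=
    ((summable_geometric_of_lt_one (by positivity) (inv_lt_one_of_one_lt₀ hw)).comp_injective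
      (add_left_injective 1)).mul_left _
  refine Summable.of_norm_bounded hgeom fun n => ?_
  rw [norm_div, norm_pow, div_eq_mul_inv, ← inv_pow, Complex.norm_intCast]
  gcongr
  exact_mod_cast ha _

lemma mul_tailSum (ha : ∀ n, |a n| ≤ B) (hw : 1 < ‖w‖) (l : ℕ) :
    w * tailSum a w l = a l + tailSum a w (l + 1) := by
  have hw0 : w ≠ 0 := norm_pos_iff.1 (zero_lt_one.trans hw)
  rw [tailSum, (summable_tailSum ha hw l).tsum_eq_zero_add, mul_add, ← tsum_mul_left, tailSum]
  congr 1
  · simp [mul_div_cancel₀ _ hw0]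
  · refine tsum_congr fun n => ?_
    rw [add_right_comm, add_assoc]
    field_simp
    ring

lemma norm_tailSum_le_of_eq_zero (ha : ∀ n, |a n| ≤ B) (hw : 1 < ‖w‖) :
    ∀ (k l : ℕ), (∀ i, l ≤ i → i < l + k → a i = 0) →
      ‖tailSum a w l‖ ≤ ‖tailSum a w (l + k)‖
  | 0, _, _ => le_rfl
  | k + 1, l, hzero => by
    have hstep : w * tailSum a w l = tailSum a w (l + 1) := by
      rw [mul_tailSum ha hw, hzero l le_rfl (by omega), Int.cast_zero, zero_add]
    calc ‖tailSum a w l‖ ≤ ‖w‖ * ‖tailSum a w l‖ := le_mul_of_one_le_left (norm_nonneg _) hw.le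
      _ = ‖tailSum a w (l + 1)‖ := by rw [← norm_mul, hstep]
      _ ≤ ‖tailSum a w (l + 1 + k)‖ :=
        norm_tailSum_le_of_eq_zero ha hw k (l + 1) fun i hi hik => hzero i (by omega) (by omega)
      _ = ‖tailSum a w (l + (k + 1))‖ := by rw [add_assoc, add_comm 1 k]

lemma frequently_norm_tailSum_ge (ha : ∀ n, |a n| ≤ B) (hw : 1 < ‖w‖)
    (hfreq : ∃ᶠ n in atTop, a n ≠ 0) :
    ∃ᶠ l in atTop, a l ≠ 0 ∧ 1 / (‖w‖ + 1) ≤ ‖tailSum a w l‖ := by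
  classical
  refine frequently_atTop.2 fun N => ?_
  obtain ⟨l, hlN, hl⟩ := frequently_atTop.1 hfreq N
  have hnext : ∃ m, a (l + 1 + m) ≠ 0 := by
    obtain ⟨n, hn, hn0⟩ := frequently_atTop.1 hfreq (l + 1)
    exact ⟨n - (l + 1), by rwa [Nat.add_sub_cancel' hn]⟩
  set m := Nat.find hnext
  have hgap : ‖tailSum a w (l + 1)‖ ≤ ‖tailSum a w (l + 1 + m)‖ :=
    norm_tailSum_le_of_eq_zero ha hw m (l + 1) fun i hi him => by
      have := Nat.find_min hnext (m := i - (l + 1)) (by omega)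
      rwa [Nat.add_sub_cancel' hi, not_not] at this
  have hsplit : 1 ≤ ‖w‖ * ‖tailSum a w l‖ + ‖tailSum a w (l + 1 + m)‖ := calc
    1 ≤ ‖(a l : ℂ)‖ := by rw [Complex.norm_intCast]; exact_mod_cast Int.one_le_abs hl
    _ = ‖w * tailSum a w l - tailSum a w (l + 1)‖ := by
      rw [mul_tailSum ha hw, add_sub_cancel_right]
    _ ≤ ‖w‖ * ‖tailSum a w l‖ + ‖tailSum a w (l + 1)‖ := by
      rw [← norm_mul]; exact norm_sub_le _ _
    _ ≤ _ := by gcongr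
  have hC : (‖w‖ + 1) * (1 / (‖w‖ + 1)) = 1 := mul_one_div_cancel (by positivity)
  by_cases h : 1 / (‖w‖ + 1) ≤ ‖tailSum a w l‖
  · exact ⟨l, hlN, hl, h⟩
  · refine ⟨l + 1 + m, by omega, Nat.find_spec hnext, ?_⟩
    nlinarith [norm_nonneg w]

end TailSum

theorem stmt12 (β₀ : ℝ) (hβ₀ : 1 < β₀) (lam : ℂ)
    (hlam : 1 < ‖(β₀ : ℂ) * lam‖) :
    ∃ C > (0 : ℝ), ∃ l : ℕ → ℕ, StrictMono l ∧ (∀ M : ℕ, 1 ≤ l M) ∧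
      (∀ M : ℕ, 0 < qdig β₀ (l M)) ∧
      ∀ M : ℕ, C ≤ ‖
        (∑' n : ℕ, (qdig β₀ (n + l M) : ℂ) / ((β₀ : ℂ) * lam) ^ (n + 1))‖ := by
  have hdig : ∀ n, |qdig β₀ n| ≤ ⌊β₀⌋ := fun n =>
    (abs_of_nonneg (qdig_mem_Icc hβ₀ n).1).le.trans (qdig_mem_Icc hβ₀ n).2
  have hnz : ∃ᶠ n in atTop, qdig β₀ n ≠ 0 := (frequently_qdig_pos hβ₀).mono fun _ h => h.ne'
  obtain ⟨l, hl_mono, hl⟩ := extraction_of_frequently_atTop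
    ((frequently_norm_tailSum_ge hdig hlam hnz).and_eventually (eventually_ge_atTop 1))
  exact ⟨_, by positivity, l, hl_mono, fun M => (hl M).2,
    fun M => (qdig_mem_Icc hβ₀ _).1.lt_of_ne' (hl M).1.1, fun M => (hl M).1.2⟩
end

section
/- Let β > 1 and let λ ∈ ℂ with 1/β < |λ| ≤ 1. Then the function F_λ : [0,1] → ℂ, F_λ(x) = Σ_{n=1}^∞ a_n(β,x)/(βλ)^n, is left-continuous at every point x ∈ (0,1] that is not simple for β: F_λ(y) → F_λ(x) as y → x with y < x. -/
open scoped BigOperators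

/-!
Each term of the series is locally constant in `x`: by induction, if `x` is not simple then no
`β τ_β^m(x)` is an integer, so `τ_β^m` is continuous at `x` and every digit `a_n(β, ·)` is
constant near `x`. Since the digits are bounded by `β`, the terms are dominated by the summable
sequence `β (β|λ|)^{-n}`, and dominated convergence for series gives continuity of `F_λ` at `x`
within `[0, 1]`, in particular from the left.
-/

open Filter Topology Set

lemma Int.eventually_floor_eq {α : Type*} [Ring α] [LinearOrder α] [IsStrictOrderedRing α]
    [FloorRing α] [TopologicalSpace α] [OrderTopology α] {z : α} (hz : Int.fract z ≠ 0) :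
    ∀ᶠ w in 𝓝 z, ⌊w⌋ = ⌊z⌋ := by
  have hlt : (⌊z⌋ : α) < z :=
    (Int.floor_le z).lt_of_ne (sub_ne_zero.mp (by rwa [Int.self_sub_floor])).symm
  filter_upwards [Ioo_mem_nhds hlt (Int.lt_floor_add_one z)] with w hw
  exact Int.floor_eq_on_Ico _ w ⟨hw.1.le, hw.2⟩

lemma tau_iterate_succ_apply (β x : ℝ) (m : ℕ) :
    (tau β)^[m + 1] x = Int.fract (β * (tau β)^[m] x) :=
  Function.iterate_succ_apply' (tau β) m x

@[simp]
lemma dig_succ (β x : ℝ) (n : ℕ) : dig β x (n + 1) = ⌊β * (tau β)^[n] x⌋ := rfl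

section BetaExpansion

variable {β : ℝ}

lemma tau_iterate_mem_Icc_s15 {y : ℝ} (hy : y ∈ Icc (0 : ℝ) 1) (m : ℕ) :
    (tau β)^[m] y ∈ Icc (0 : ℝ) 1 := by
  cases m with
  | zero => exact hy
  | succ m =>
    rw [tau_iterate_succ_apply]
    exact ⟨Int.fract_nonneg _, (Int.fract_lt_one _).le⟩

lemma isSimplePt_of_fract_eq_zero (hβ : 0 < β) {x : ℝ} {m : ℕ}
    (ht : (tau β)^[m] x ∈ Ioc (0 : ℝ) 1) (hf : Int.fract (β * (tau β)^[m] x) = 0) :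
    IsSimplePt β x := by
  obtain ⟨j, hj⟩ := Int.fract_eq_zero_iff.mp hf
  have hj_pos : (0 : ℝ) < j := hj ▸ mul_pos hβ ht.1
  have hj_le : (j : ℝ) ≤ β := hj ▸ mul_le_of_le_one_right hβ.le ht.2
  lift j to ℕ using (Int.cast_pos.mp hj_pos).le
  refine ⟨m + 1, le_add_self, j, ?_, ?_, ?_⟩
  · exact_mod_cast hj_pos
  · exact Int.le_floor.mpr (by exact_mod_cast hj_le)
  · rw [Nat.add_sub_cancel, eq_div_iff hβ.ne', mul_comm]
    exact_mod_cast hj.symm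

lemma tau_iterate_mem_Ioc_of_not_isSimplePt (hβ : 0 < β) {x : ℝ} (hx : x ∈ Ioc (0 : ℝ) 1)
    (hns : ¬ IsSimplePt β x) (m : ℕ) : (tau β)^[m] x ∈ Ioc (0 : ℝ) 1 := by
  induction m with
  | zero => exact hx
  | succ m ih =>
    rw [tau_iterate_succ_apply]
    exact ⟨(Int.fract_nonneg _).lt_of_ne' fun hf => hns (isSimplePt_of_fract_eq_zero hβ ih hf),
      (Int.fract_lt_one _).le⟩

lemma fract_ne_zero_of_not_isSimplePt (hβ : 0 < β) {x : ℝ} (hx : x ∈ Ioc (0 : ℝ) 1)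
    (hns : ¬ IsSimplePt β x) (m : ℕ) : Int.fract (β * (tau β)^[m] x) ≠ 0 := fun hf =>
  hns (isSimplePt_of_fract_eq_zero hβ (tau_iterate_mem_Ioc_of_not_isSimplePt hβ hx hns m) hf)

lemma continuousAt_tau_iterate (hβ : 0 < β) {x : ℝ} (hx : x ∈ Ioc (0 : ℝ) 1)
    (hns : ¬ IsSimplePt β x) (m : ℕ) : ContinuousAt (tau β)^[m] x := by
  induction m with
  | zero => exact continuousAt_id
  | succ m ih =>
    have hfract : ContinuousAt Int.fract (β * (tau β)^[m] x) := continuousAt_fract <|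
      sub_ne_zero.mp (by rw [Int.self_sub_floor]; exact fract_ne_zero_of_not_isSimplePt hβ hx hns m)
    have hmul : ContinuousAt (fun y => β * (tau β)^[m] y) x := continuousAt_const.mul ih
    rw [funext (tau_iterate_succ_apply β · m)]
    exact ContinuousAt.comp (f := fun y => β * (tau β)^[m] y) hfract hmul

lemma eventually_dig_eq (hβ : 0 < β) {x : ℝ} (hx : x ∈ Ioc (0 : ℝ) 1)
    (hns : ¬ IsSimplePt β x) (n : ℕ) : ∀ᶠ y in 𝓝 x, dig β y (n + 1) = dig β x (n + 1) := by
  have hcont : ContinuousAt (fun y => β * (tau β)^[n] y) x :=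
    continuousAt_const.mul (continuousAt_tau_iterate hβ hx hns n)
  simpa only [dig_succ] using
    hcont.eventually (Int.eventually_floor_eq (fract_ne_zero_of_not_isSimplePt hβ hx hns n))

lemma norm_dig_le (hβ : 0 ≤ β) {y : ℝ} (hy : y ∈ Icc (0 : ℝ) 1) (n : ℕ) :
    ‖(dig β y (n + 1) : ℂ)‖ ≤ β := by
  have ht := tau_iterate_mem_Icc_s15 (β := β) hy n
  have hle : β * (tau β)^[n] y ≤ β := mul_le_of_le_one_right hβ ht.2
  rw [Complex.norm_intCast, dig_succ,
    abs_of_nonneg (Int.cast_nonneg (Int.floor_nonneg.mpr (mul_nonneg hβ ht.1)))]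
  exact (Int.floor_le _).trans hle

lemma norm_dig_div_le (hβ : 0 ≤ β) (lam : ℂ) {y : ℝ} (hy : y ∈ Icc (0 : ℝ) 1) (n : ℕ) :
    ‖(dig β y (n + 1) : ℂ) / ((β : ℂ) * lam) ^ (n + 1)‖ ≤ β * (β * ‖lam‖)⁻¹ ^ (n + 1) := by
  rw [norm_div, norm_pow, norm_mul, Complex.norm_real, Real.norm_of_nonneg hβ, inv_pow,
    ← div_eq_mul_inv]
  exact div_le_div_of_nonneg_right (norm_dig_le hβ hy n) (by positivity)

lemma continuousWithinAt_Ffun (hβ : 0 < β) {lam : ℂ} (hlam : 1 < β * ‖lam‖) {x : ℝ}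
    (hx : x ∈ Ioc (0 : ℝ) 1) (hns : ¬ IsSimplePt β x) :
    ContinuousWithinAt (Ffun β lam) (Icc 0 1) x := by
  have hsum : Summable fun n : ℕ => β * (β * ‖lam‖)⁻¹ ^ (n + 1) :=
    ((summable_nat_add_iff 1).mpr (summable_geometric_of_lt_one (by positivity)
      (inv_lt_one_of_one_lt₀ hlam))).mul_left β
  refine tendsto_tsum_of_dominated_convergence hsum (fun n => ?_) ?_
  · refine tendsto_const_nhds.congr' (EventuallyEq.symm ?_)
    filter_upwards [nhdsWithin_le_nhds (eventually_dig_eq hβ hx hns n)] with y hy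
    rw [hy]
  · filter_upwards [self_mem_nhdsWithin] with y hy n
    exact norm_dig_div_le hβ.le lam hy n

end BetaExpansion

theorem stmt15_general (β : ℝ) (hβ : 1 < β) (lam : ℂ)
    (h1 : 1 / β < ‖lam‖)
    (x : ℝ) (hx : x ∈ Set.Ioc (0 : ℝ) 1) (hns : ¬ IsSimplePt β x) :
    Filter.Tendsto (Ffun β lam) (nhdsWithin x (Set.Ico 0 x)) (nhds (Ffun β lam x)) := by
  have hβ0 : 0 < β := zero_lt_one.trans hβ
  have hlam : 1 < β * ‖lam‖ := by rwa [div_lt_iff₀' hβ0] at h1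
  exact (continuousWithinAt_Ffun hβ0 hlam hx hns).mono fun y hy => ⟨hy.1, hy.2.le.trans hx.2⟩

theorem stmt15 (β : ℝ) (hβ : 1 < β) (lam : ℂ)
    (h1 : 1 / β < ‖lam‖) (h2 : ‖lam‖ ≤ 1)
    (x : ℝ) (hx : x ∈ Set.Ioc (0 : ℝ) 1) (hns : ¬ IsSimplePt β x) :
    Filter.Tendsto (Ffun β lam) (nhdsWithin x (Set.Ico 0 x)) (nhds (Ffun β lam x)) :=
  stmt15_general β hβ lam h1 x hx hns
end
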